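/- Assume condition (H). Then, setting u_i = 1 − d_{i-1,n} for 0 ≤ i ≤ n+1, the vector u is an optimal solution of the Kantorovich–Rubinstein dual problem for d_{n,n+1}, and consequently d_{n,n+1} = Σ_{i=0}^n (π_i^n − π_i^{n+1}) d_{i-1,n}. -/
import Mathlib


/-- `p` is a probability distribution on `ℕ` supported on `{0,…,n}`. -/
def IsProbOn (p : ℕ → ℝ) (n : ℕ) : Prop :=
  (∀ i, 0 ≤ p i) ∧ (∀ i, n < i → p i = 0) ∧ ∑ i ∈ Finset.range (n + 1), p i = 1

/-- `z` is a transport plan from `μ` (supported on `{0,…,m}`) to `ν` (supported on `{0,…,n}`):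
a nonnegative matrix on the rectangle `{0,…,m} × {0,…,n}` with row sums `μ` and column sums `ν`. -/
def IsPlan (μ ν : ℕ → ℝ) (m n : ℕ) (z : ℕ → ℕ → ℝ) : Prop :=
  (∀ i j, 0 ≤ z i j) ∧
  (∀ i j, m < i ∨ n < j → z i j = 0) ∧
  (∀ i, i ≤ m → ∑ j ∈ Finset.range (n + 1), z i j = μ i) ∧
  (∀ j, j ≤ n → ∑ i ∈ Finset.range (m + 1), z i j = ν j)

/-- Transport cost of the plan `z` with ground cost `(i,j) ↦ D i j` (where `D i j`
encodes `d_{i-1,j-1}` of the paper, indices shifted by one so that `0` plays the role of `-1`). -/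
noncomputable def cost (D : ℕ → ℕ → ℝ) (m n : ℕ) (z : ℕ → ℕ → ℝ) : ℝ :=
  ∑ i ∈ Finset.range (m + 1), ∑ j ∈ Finset.range (n + 1), z i j * D i j

/-- `D` is the recursive optimal transport family associated with the weights `π`:
indices are shifted by one, so `D (m+1) (n+1) = d_{m,n}`, `D 0 (j+1) = d_{-1,j} = 1`,
`D 0 0 = d_{-1,-1} = 0`, and `d_{m,n}` is the minimum transport cost from `π m` to `π n`
with ground cost `(i,j) ↦ d_{i-1,j-1} = D i j`. -/
def IsRecursiveOT (π : ℕ → ℕ → ℝ) (D : ℕ → ℕ → ℝ) : Prop :=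
  D 0 0 = 0 ∧ (∀ j, D 0 (j + 1) = 1) ∧ (∀ i, D (i + 1) 0 = 1) ∧
  ∀ m n, IsLeast {c : ℝ | ∃ z, IsPlan (π m) (π n) m n z ∧ c = cost D m n z}
    (D (m + 1) (n + 1))

/-- Condition (H): `π_n^n > 0` and `π_i^n ≤ π_i^{n-1}` for `i < n`. -/
def CondH (π : ℕ → ℕ → ℝ) : Prop :=
  ∀ n, 0 < π (n + 1) (n + 1) ∧ ∀ i, i ≤ n → π (n + 1) i ≤ π n i

lemma D_nonneg (π D : ℕ → ℕ → ℝ) (hD : IsRecursiveOT π D) : ∀ i j, 0 ≤ D i j := by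
  intro i
  induction i using Nat.strong_induction_on with
  | _ i ih =>
    intro j
    match i, j with
    | 0, 0 => rw [hD.1]
    | 0, j + 1 => rw [hD.2.1]; norm_num
    | i + 1, 0 => rw [hD.2.2.1]; norm_num
    | i + 1, j + 1 =>
      obtain ⟨z, hz, hc⟩ := (hD.2.2.2 i j).1
      rw [hc]
      refine Finset.sum_nonneg fun a ha => Finset.sum_nonneg fun b hb => ?_
      exact mul_nonneg (hz.1 a b) (ih a (Finset.mem_range.mp ha) b)

lemma D_le_one (π D : ℕ → ℕ → ℝ) (hπ : ∀ n, IsProbOn (π n) n)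
    (hD : IsRecursiveOT π D) : ∀ i j, D i j ≤ 1 := by
  intro i
  induction i using Nat.strong_induction_on with
  | _ i ih =>
    intro j
    match i, j with
    | 0, 0 => rw [hD.1]; norm_num
    | 0, j + 1 => rw [hD.2.1]
    | i + 1, 0 => rw [hD.2.2.1]
    | i + 1, j + 1 =>
      have hmem : cost D i j (fun a b => π i a * π j b) ∈
          {c : ℝ | ∃ z, IsPlan (π i) (π j) i j z ∧ c = cost D i j z} := by
        refine ⟨_, ⟨fun a b => mul_nonneg ((hπ i).1 a) ((hπ j).1 b), ?_, ?_, ?_⟩, rfl⟩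
        · intro a b hab
          rcases hab with h | h
          · rw [(hπ i).2.1 a h, zero_mul]
          · rw [(hπ j).2.1 b h, mul_zero]
        · intro a _
          rw [← Finset.mul_sum, (hπ j).2.2, mul_one]
        · intro b _
          rw [← Finset.sum_mul, (hπ i).2.2, one_mul]
      have := (hD.2.2.2 i j).2 hmem
      refine this.trans ?_
      unfold cost
      calc ∑ a ∈ Finset.range (i + 1), ∑ b ∈ Finset.range (j + 1), π i a * π j b * D a b
          ≤ ∑ a ∈ Finset.range (i + 1), ∑ b ∈ Finset.range (j + 1), π i a * π j b := by
            refine Finset.sum_le_sum fun a ha => Finset.sum_le_sum fun b hb => ?_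
            have h1 : D a b ≤ 1 := ih a (Finset.mem_range.mp ha) b
            nlinarith [mul_nonneg ((hπ i).1 a) ((hπ j).1 b),
              D_nonneg π D hD a b]
        _ = 1 := by
            simp only [← Finset.mul_sum, (hπ _).2.2]
            rw [← Finset.sum_mul, (hπ i).2.2, one_mul]

lemma D_diag (π D : ℕ → ℕ → ℝ) (hπ : ∀ n, IsProbOn (π n) n)
    (hD : IsRecursiveOT π D) : ∀ k, D k k = 0 := by
  intro k
  induction k using Nat.strong_induction_on with
  | _ k ih =>
    match k with
    | 0 => exact hD.1
    | k + 1 =>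
      have hmem : cost D k k (fun a b => if a = b then π k a else 0) ∈
          {c : ℝ | ∃ z, IsPlan (π k) (π k) k k z ∧ c = cost D k k z} := by
        refine ⟨_, ⟨?_, ?_, ?_, ?_⟩, rfl⟩
        · intro a b
          by_cases h : a = b <;> simp [h, (hπ k).1]
        · intro a b hab
          rcases hab with h | h
          · by_cases hab' : a = b <;> simp [hab', (hπ k).2.1]
            exact (hπ k).2.1 b (hab' ▸ h)
          · by_cases hab' : a = b
            · subst hab'; simp [(hπ k).2.1 a h]
            · simp [hab']
        · intro a ha
          rw [Finset.sum_ite_eq (Finset.range (k + 1)) a (fun _ => π k a)]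
          simp [Finset.mem_range.mpr (Nat.lt_succ_of_le ha)]
        · intro b hb
          rw [Finset.sum_ite_eq' (Finset.range (k + 1)) b (fun _ => π k _)]
          simp [Finset.mem_range.mpr (Nat.lt_succ_of_le hb)]
      have hle := (hD.2.2.2 k k).2 hmem
      have hcost : cost D k k (fun a b => if a = b then π k a else 0) = 0 := by
        unfold cost
        refine Finset.sum_eq_zero fun a ha => Finset.sum_eq_zero fun b hb => ?_
        by_cases h : a = b
        · subst h; rw [ih a (Finset.mem_range.mp ha), mul_zero]
        · simp [h]
      have := D_nonneg π D hD (k + 1) (k + 1)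
      linarith [hcost ▸ hle]

lemma weak_duality (D : ℕ → ℕ → ℝ) (μ ν : ℕ → ℝ) (m n : ℕ) (z : ℕ → ℕ → ℝ)
    (hz : IsPlan μ ν m n z) (v : ℕ → ℝ)
    (hv : ∀ i, i ≤ m → ∀ j, j ≤ n → v j ≤ v i + D i j) :
    ∑ j ∈ Finset.range (n + 1), ν j * v j - ∑ i ∈ Finset.range (m + 1), μ i * v i
      ≤ cost D m n z := by
  have h1 : ∑ j ∈ Finset.range (n + 1), ν j * v j
      = ∑ i ∈ Finset.range (m + 1), ∑ j ∈ Finset.range (n + 1), z i j * v j := by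
    rw [Finset.sum_comm]
    refine Finset.sum_congr rfl fun j hj => ?_
    rw [← Finset.sum_mul, hz.2.2.2 j (Nat.lt_succ_iff.mp (Finset.mem_range.mp hj))]
  have h2 : ∑ i ∈ Finset.range (m + 1), μ i * v i
      = ∑ i ∈ Finset.range (m + 1), ∑ j ∈ Finset.range (n + 1), z i j * v i := by
    refine Finset.sum_congr rfl fun i hi => ?_
    rw [← Finset.sum_mul, hz.2.2.1 i (Nat.lt_succ_iff.mp (Finset.mem_range.mp hi))]
  rw [h1, h2, ← Finset.sum_sub_distrib]
  unfold cost
  refine Finset.sum_le_sum fun i hi => ?_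
  rw [← Finset.sum_sub_distrib]
  refine Finset.sum_le_sum fun j hj => ?_
  have hvij := hv i (Nat.lt_succ_iff.mp (Finset.mem_range.mp hi)) j
    (Nat.lt_succ_iff.mp (Finset.mem_range.mp hj))
  nlinarith [hz.1 i j]

lemma D_triangle (π D : ℕ → ℕ → ℝ) (hπ : ∀ n, IsProbOn (π n) n)
    (hD : IsRecursiveOT π D) : ∀ i j k, D i k ≤ D i j + D j k := by
  have key : ∀ s i j k, i + j + k = s → D i k ≤ D i j + D j k := by
    intro s
    induction s using Nat.strong_induction_on with
    | _ s ih =>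
      intro i j k hs
      have hnn := D_nonneg π D hD
      match i, j, k with
      | 0, j, 0 => rw [hD.1]; linarith [hnn 0 j, hnn j 0]
      | 0, 0, k + 1 => rw [hD.2.1, hD.1]; linarith
      | 0, j + 1, k + 1 => rw [hD.2.1, hD.2.1]; linarith [hnn (j+1) (k+1)]
      | i + 1, 0, 0 => rw [hD.2.2.1, hD.1]; linarith [hnn (i+1) 0]
      | i + 1, j + 1, 0 => rw [hD.2.2.1, hD.2.2.1]; linarith [hnn (i+1) (j+1)]
      | i + 1, 0, k + 1 =>
        rw [hD.2.2.1, hD.2.1]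
        linarith [D_le_one π D hπ hD (i+1) (k+1)]
      | i + 1, j + 1, k + 1 =>
        obtain ⟨z1, hz1, hc1⟩ := (hD.2.2.2 i j).1
        obtain ⟨z2, hz2, hc2⟩ := (hD.2.2.2 j k).1
        set w := π j with hw
        -- glued plan
        set z : ℕ → ℕ → ℝ :=
          fun a c => ∑ b ∈ Finset.range (j + 1), z1 a b * z2 b c / w b with hzdef
        -- vanishing facts
        have hz1v : ∀ b, b ≤ j → w b = 0 → ∀ a, z1 a b = 0 := by
          intro b hb hwb a
          by_cases ha : a ≤ i
          · have hsum : ∑ a ∈ Finset.range (i + 1), z1 a b = 0 := by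
              rw [hz1.2.2.2 b hb, hwb]
            have := (Finset.sum_eq_zero_iff_of_nonneg
              (fun x _ => hz1.1 x b)).mp hsum
            exact this a (Finset.mem_range.mpr (Nat.lt_succ_of_le ha))
          · exact hz1.2.1 a b (Or.inl (by omega))
        have hz2v : ∀ b, b ≤ j → w b = 0 → ∀ c, z2 b c = 0 := by
          intro b hb hwb c
          by_cases hc : c ≤ k
          · have hsum : ∑ c ∈ Finset.range (k + 1), z2 b c = 0 := by
              rw [hz2.2.2.1 b hb, hwb]
            have := (Finset.sum_eq_zero_iff_of_nonneg
              (fun x _ => hz2.1 b x)).mp hsum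
            exact this c (Finset.mem_range.mpr (Nat.lt_succ_of_le hc))
          · exact hz2.2.1 b c (Or.inr (by omega))
        -- marginal sums of the glued kernel
        have hA : ∀ a, ∀ b, b ≤ j →
            ∑ c ∈ Finset.range (k + 1), z1 a b * z2 b c / w b = z1 a b := by
          intro a b hb
          by_cases hwb : w b = 0
          · simp [hz2v b hb hwb, hz1v b hb hwb a]
          · have : ∀ c, z1 a b * z2 b c / w b = (z1 a b / w b) * z2 b c := by
              intro c; ring
            simp_rw [this]
            rw [← Finset.mul_sum, hz2.2.2.1 b hb, div_mul_cancel₀ _ hwb]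
        have hB : ∀ c, ∀ b, b ≤ j →
            ∑ a ∈ Finset.range (i + 1), z1 a b * z2 b c / w b = z2 b c := by
          intro c b hb
          by_cases hwb : w b = 0
          · simp [hz2v b hb hwb, hz1v b hb hwb]
          · have : ∀ a, z1 a b * z2 b c / w b = z1 a b * (z2 b c / w b) := by
              intro a; ring
            simp_rw [this]
            rw [← Finset.sum_mul, hz1.2.2.2 b hb, mul_div_cancel₀ _ hwb]
        have hwnn : ∀ b, 0 ≤ w b := (hπ j).1
        have hplan : IsPlan (π i) (π k) i k z := by
          refine ⟨?_, ?_, ?_, ?_⟩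
          · intro a c
            refine Finset.sum_nonneg fun b _ => ?_
            exact div_nonneg (mul_nonneg (hz1.1 a b) (hz2.1 b c)) (hwnn b)
          · intro a c hac
            refine Finset.sum_eq_zero fun b _ => ?_
            rcases hac with h | h
            · rw [hz1.2.1 a b (Or.inl h), zero_mul, zero_div]
            · rw [hz2.2.1 b c (Or.inr h), mul_zero, zero_div]
          · intro a ha
            rw [hzdef]
            simp only
            rw [Finset.sum_comm]
            calc ∑ b ∈ Finset.range (j + 1), ∑ c ∈ Finset.range (k + 1),
                  z1 a b * z2 b c / w b
                = ∑ b ∈ Finset.range (j + 1), z1 a b := by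
                  refine Finset.sum_congr rfl fun b hb => ?_
                  exact hA a b (Nat.lt_succ_iff.mp (Finset.mem_range.mp hb))
              _ = π i a := hz1.2.2.1 a ha
          · intro c hc
            rw [hzdef]
            simp only
            rw [Finset.sum_comm]
            calc ∑ b ∈ Finset.range (j + 1), ∑ a ∈ Finset.range (i + 1),
                  z1 a b * z2 b c / w b
                = ∑ b ∈ Finset.range (j + 1), z2 b c := by
                  refine Finset.sum_congr rfl fun b hb => ?_
                  exact hB c b (Nat.lt_succ_iff.mp (Finset.mem_range.mp hb))
              _ = π k c := hz2.2.2.2 c hc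
        have hle := (hD.2.2.2 i k).2 ⟨z, hplan, rfl⟩
        refine hle.trans ?_
        -- cost of glued plan ≤ cost z1 + cost z2
        have hcost : cost D i k z ≤ cost D i j z1 + cost D j k z2 := by
          unfold cost
          have step1 : ∀ a ∈ Finset.range (i + 1), ∀ c ∈ Finset.range (k + 1),
              z a c * D a c ≤ ∑ b ∈ Finset.range (j + 1),
                (z1 a b * z2 b c / w b * D a b + z1 a b * z2 b c / w b * D b c) := by
            intro a ha c hc
            rw [hzdef]
            simp only
            rw [Finset.sum_mul]
            refine Finset.sum_le_sum fun b hb => ?_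
            have htri : D a c ≤ D a b + D b c := by
              refine ih (a + b + c) (by
                have := Finset.mem_range.mp ha
                have := Finset.mem_range.mp hb
                have := Finset.mem_range.mp hc
                omega) a b c rfl
            have ht : 0 ≤ z1 a b * z2 b c / w b :=
              div_nonneg (mul_nonneg (hz1.1 a b) (hz2.1 b c)) (hwnn b)
            nlinarith
          calc ∑ a ∈ Finset.range (i + 1), ∑ c ∈ Finset.range (k + 1), z a c * D a c
              ≤ ∑ a ∈ Finset.range (i + 1), ∑ c ∈ Finset.range (k + 1),
                  ∑ b ∈ Finset.range (j + 1),
                  (z1 a b * z2 b c / w b * D a b + z1 a b * z2 b c / w b * D b c) := by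
                refine Finset.sum_le_sum fun a ha => Finset.sum_le_sum fun c hc => ?_
                exact step1 a ha c hc
            _ = (∑ a ∈ Finset.range (i + 1), ∑ c ∈ Finset.range (k + 1),
                  ∑ b ∈ Finset.range (j + 1), z1 a b * z2 b c / w b * D a b)
                + ∑ a ∈ Finset.range (i + 1), ∑ c ∈ Finset.range (k + 1),
                  ∑ b ∈ Finset.range (j + 1), z1 a b * z2 b c / w b * D b c := by
                simp_rw [Finset.sum_add_distrib]
            _ = cost D i j z1 + cost D j k z2 := by
                unfold cost
                congr 1
                · refine Finset.sum_congr rfl fun a ha => ?_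
                  rw [Finset.sum_comm]
                  refine Finset.sum_congr rfl fun b hb => ?_
                  rw [← Finset.sum_mul, hA a b (Nat.lt_succ_iff.mp (Finset.mem_range.mp hb))]
                · calc ∑ a ∈ Finset.range (i + 1), ∑ c ∈ Finset.range (k + 1),
                        ∑ b ∈ Finset.range (j + 1), z1 a b * z2 b c / w b * D b c
                      = ∑ c ∈ Finset.range (k + 1), ∑ b ∈ Finset.range (j + 1),
                        ∑ a ∈ Finset.range (i + 1), z1 a b * z2 b c / w b * D b c := by
                        rw [Finset.sum_comm]
                        exact Finset.sum_congr rfl fun c _ => Finset.sum_comm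
                    _ = ∑ c ∈ Finset.range (k + 1), ∑ b ∈ Finset.range (j + 1),
                        z2 b c * D b c := by
                        refine Finset.sum_congr rfl fun c _ =>
                          Finset.sum_congr rfl fun b hb => ?_
                        rw [← Finset.sum_mul,
                          hB c b (Nat.lt_succ_iff.mp (Finset.mem_range.mp hb))]
                    _ = ∑ b ∈ Finset.range (j + 1), ∑ c ∈ Finset.range (k + 1),
                        z2 b c * D b c := Finset.sum_comm
        rw [hc1, hc2]
        exact hcost
  intro i j k; exact key (i + j + k) i j k rfl

/-- under condition (H), `u i = 1 − d_{i-1,n}` for `0 ≤ i ≤ n+1` is an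
optimal solution of the Kantorovich–Rubinstein dual of `d_{n,n+1}`, and consequently
`d_{n,n+1} = Σ_{i=0}^n (π_i^n − π_i^{n+1}) d_{i-1,n}`. -/
theorem dual_optimal_solution (π D : ℕ → ℕ → ℝ)
    (hπ : ∀ n, IsProbOn (π n) n)
    (hH : CondH π)
    (hD : IsRecursiveOT π D)
    (n : ℕ) (u : ℕ → ℝ)
    (hu : ∀ i, i ≤ n + 1 → u i = 1 - D i (n + 1)) :
    ((∀ i, i ≤ n + 1 → ∀ j, j ≤ n + 1 → u j ≤ u i + D i j) ∧
      ∀ v : ℕ → ℝ, (∀ i, i ≤ n + 1 → ∀ j, j ≤ n + 1 → v j ≤ v i + D i j) →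
        ∑ j ∈ Finset.range (n + 2), (π (n + 1) j - π n j) * v j ≤
          ∑ j ∈ Finset.range (n + 2), (π (n + 1) j - π n j) * u j) ∧
    D (n + 1) (n + 2) = ∑ i ∈ Finset.range (n + 1), (π n i - π (n + 1) i) * D i (n + 1) := by
  have htri := D_triangle π D hπ hD
  have hdiag := D_diag π D hπ hD
  set S : ℝ := ∑ i ∈ Finset.range (n + 1), (π n i - π (n + 1) i) * D i (n + 1) with hS
  -- feasibility of u
  have hfeas : ∀ i, i ≤ n + 1 → ∀ j, j ≤ n + 1 → u j ≤ u i + D i j := by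
    intro i hi j hj
    rw [hu i hi, hu j hj]
    linarith [htri i j (n + 1)]
  -- the explicit primal plan
  set zs : ℕ → ℕ → ℝ := fun i j => if i ≤ n then
      ((if j = i then π (n + 1) i else 0) + (if j = n + 1 then π n i - π (n + 1) i else 0))
    else 0 with hzs
  have hplan : IsPlan (π n) (π (n + 1)) n (n + 1) zs := by
    refine ⟨?_, ?_, ?_, ?_⟩
    · intro i j
      simp only [hzs]
      split_ifs with h1 h2 _ h2 _ <;>
        first
        | linarith [(hπ (n + 1)).1 i, (hH n).2 i h1]
        | linarith
    · intro i j hij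
      simp only [hzs]
      split_ifs <;> first | rfl | omega | norm_num
    · intro i hi
      simp only [hzs, hi, if_true]
      rw [Finset.sum_add_distrib,
        Finset.sum_ite_eq' (Finset.range (n + 2)) i (fun _ => π (n + 1) i),
        Finset.sum_ite_eq' (Finset.range (n + 2)) (n + 1)
          (fun _ => π n i - π (n + 1) i),
        if_pos (Finset.mem_range.mpr (by omega : i < n + 2)),
        if_pos (Finset.mem_range.mpr (by omega : n + 1 < n + 2))]
      ring
    · intro j hj
      have hmem : ∀ i ∈ Finset.range (n + 1), i ≤ n :=
        fun i hi => Nat.lt_succ_iff.mp (Finset.mem_range.mp hi)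
      simp only [hzs]
      rw [Finset.sum_congr rfl (fun i hi => by rw [if_pos (hmem i hi)]),
        Finset.sum_add_distrib,
        Finset.sum_ite_eq (Finset.range (n + 1)) j (fun i => π (n + 1) i)]
      by_cases hjn : j = n + 1
      · subst hjn
        rw [if_neg (by simp), zero_add,
          Finset.sum_congr rfl (fun i _ => if_pos rfl),
          Finset.sum_sub_distrib, (hπ n).2.2]
        have h2 : ∑ i ∈ Finset.range (n + 1), π (n + 1) i
            = 1 - π (n + 1) (n + 1) := by
          have := (hπ (n + 1)).2.2
          rw [Finset.sum_range_succ] at this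
          linarith
        rw [h2]; ring
      · rw [if_pos (Finset.mem_range.mpr (by omega : j < n + 1)),
          Finset.sum_congr rfl (fun i _ => if_neg hjn), Finset.sum_const, smul_zero,
          add_zero]
  -- cost of the explicit plan is S
  have hcost : cost D n (n + 1) zs = S := by
    unfold cost
    rw [hS]
    refine Finset.sum_congr rfl fun i hi => ?_
    have hi' : i ≤ n := Nat.lt_succ_iff.mp (Finset.mem_range.mp hi)
    simp only [hzs, hi', if_true]
    simp_rw [add_mul, ite_mul, zero_mul]
    rw [Finset.sum_add_distrib,
      Finset.sum_ite_eq' (Finset.range (n + 2)) i (fun j => π (n + 1) i * D i j),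
      Finset.sum_ite_eq' (Finset.range (n + 2)) (n + 1)
        (fun j => (π n i - π (n + 1) i) * D i j),
      if_pos (Finset.mem_range.mpr (by omega : i < n + 2)),
      if_pos (Finset.mem_range.mpr (by omega : n + 1 < n + 2)),
      hdiag i, mul_zero, zero_add]
  -- primal bound
  have hprimal : D (n + 1) (n + 2) ≤ S := by
    have := (hD.2.2.2 n (n + 1)).2 ⟨zs, hplan, rfl⟩
    rwa [hcost] at this
  -- dual objective rewriting
  have hobj : ∀ v : ℕ → ℝ, ∑ j ∈ Finset.range (n + 2), (π (n + 1) j - π n j) * v j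
      = ∑ j ∈ Finset.range (n + 2), π (n + 1) j * v j
        - ∑ i ∈ Finset.range (n + 1), π n i * v i := by
    intro v
    simp_rw [sub_mul]
    rw [Finset.sum_sub_distrib]
    congr 1
    rw [Finset.sum_range_succ, (hπ n).2.1 (n + 1) (by omega), zero_mul, add_zero]
  -- dual value of u is S
  have hdualu : ∑ j ∈ Finset.range (n + 2), (π (n + 1) j - π n j) * u j = S := by
    have hterm : ∀ j ∈ Finset.range (n + 2), (π (n + 1) j - π n j) * u j
        = (π (n + 1) j - π n j) - (π (n + 1) j - π n j) * D j (n + 1) := by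
      intro j hj
      rw [hu j (Nat.lt_succ_iff.mp (Finset.mem_range.mp hj))]
      ring
    rw [Finset.sum_congr rfl hterm, Finset.sum_sub_distrib]
    have hzero : ∑ j ∈ Finset.range (n + 2), (π (n + 1) j - π n j) = 0 := by
      rw [Finset.sum_sub_distrib, (hπ (n + 1)).2.2, Finset.sum_range_succ,
        (hπ n).2.2, (hπ n).2.1 (n + 1) (by omega), add_zero, sub_self]
    rw [hzero, zero_sub, hS]
    rw [Finset.sum_range_succ, hdiag (n + 1), mul_zero, add_zero,
      ← Finset.sum_neg_distrib]
    exact Finset.sum_congr rfl fun j _ => by ring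
  -- optimal plan and weak duality
  obtain ⟨zo, hzo, hco⟩ := (hD.2.2.2 n (n + 1)).1
  have hwd : ∀ v : ℕ → ℝ, (∀ i, i ≤ n + 1 → ∀ j, j ≤ n + 1 → v j ≤ v i + D i j) →
      ∑ j ∈ Finset.range (n + 2), (π (n + 1) j - π n j) * v j ≤ D (n + 1) (n + 2) := by
    intro v hv
    have := weak_duality D (π n) (π (n + 1)) n (n + 1) zo hzo v
      (fun i hi j hj => hv i (by omega) j hj)
    rw [hobj v, hco]
    exact this
  refine ⟨⟨hfeas, fun v hv => ?_⟩, ?_⟩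
  · have h1 := hwd v hv
    rw [hdualu]
    linarith
  · have h2 := hwd u hfeas
    rw [hdualu] at h2
    linarith
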